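/- arXiv:1702.02614 — 5 statements merged into one kernel-verified Lean document; each statement's English description precedes it below -/
import Mathlib

section
/- For N ∈ {1, 2, 3}, the subgroup of SL₂(ℤ) generated by the two matrices [[1,1],[0,1]] and [[1,0],[N,1]] is equal to the congruence subgroup Γ₁(N) = {γ ∈ SL₂(ℤ) : γ ≡ [[1,*],[0,1]] mod N}. -/
/-!
Euclidean descent on the lower-left entry `c` of `γ = !![a, b; c, d] ∈ Γ₁(N)`. Left
multiplication by `T ^ k` replaces `a` by `a + k c`, which can be made at most `|c| / 2` in
absolute value; left multiplication by `L (N j) = !![1, 0; N j, 1]` then replaces `c = N c₀` by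
`N (c₀ + j a)`, which can be made at most `N |a| / 2 ≤ N |c| / 4`. This is smaller than `|c|`
exactly because `N ≤ 3`. When `c = 0`, `γ = ± T ^ b`, and `-1` lies in `Γ₁(N)` only for `N ∣ 2`,
where it is `(L 1 * T⁻¹) ^ 3` resp. `(L 2 * T⁻¹) ^ 2`.
-/

open Matrix ModularGroup CongruenceSubgroup
open scoped MatrixGroups

theorem Int.exists_two_mul_abs_add_mul_le (a : ℤ) {c : ℤ} (hc : c ≠ 0) :
    ∃ k : ℤ, 2 * |a + k * c| ≤ |c| := by
  have hm : 0 < c.natAbs := Int.natAbs_pos.2 hc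
  obtain ⟨q, hq⟩ := Int.natAbs_dvd.1 (Int.dvd_self_sub_bmod (x := a) (m := c.natAbs))
  refine ⟨-q, ?_⟩
  rw [show a + -q * c = a.bmod c.natAbs by linear_combination hq, Int.abs_eq_natAbs c]
  have h : |a.bmod c.natAbs| ≤ c.natAbs / 2 :=
    abs_le.2 ⟨Int.le_bmod hm, by have := Int.bmod_lt (x := a) hm; omega⟩
  omega

theorem exists_abs_add_mul_lt {N a c : ℤ} (hN0 : 0 ≤ N) (hN3 : N ≤ 3) (hac : IsCoprime a c)
    (hNc : N ∣ c) (hc : c ≠ 0) : ∃ k j : ℤ, |c + j * N * (a + k * c)| < |c| := by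
  obtain ⟨c₀, hc₀⟩ := hNc
  by_cases hcu : IsUnit c
  · -- Here halving would only give `a + k c = 0`; instead make it `1`.
    have hN1 : N = 1 := Int.eq_one_of_dvd_one hN0 (hc₀ ▸ dvd_mul_right N c₀ |>.trans hcu.dvd)
    rcases Int.isUnit_iff.1 hcu with rfl | rfl
    · exact ⟨1 - a, -1, by simp [hN1]⟩
    · exact ⟨a - 1, 1, by simp [hN1]⟩
  obtain ⟨k, hk⟩ := Int.exists_two_mul_abs_add_mul_le a hc
  have ha' : a + k * c ≠ 0 := fun h =>
    hcu (hac.isUnit_of_dvd' ⟨-k, by linear_combination h⟩ dvd_rfl)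
  obtain ⟨j, hj⟩ := Int.exists_two_mul_abs_add_mul_le c₀ ha'
  refine ⟨k, j, ?_⟩
  have key : 4 * |c + j * N * (a + k * c)| ≤ N * |c| :=
    calc 4 * |c + j * N * (a + k * c)| = 2 * N * (2 * |c₀ + j * (a + k * c)|) := by
          rw [show c + j * N * (a + k * c) = N * (c₀ + j * (a + k * c)) by
            linear_combination hc₀, abs_mul, abs_of_nonneg hN0]
          ring
      _ ≤ 2 * N * |a + k * c| := by gcongr
      _ ≤ N * |c| := by nlinarith
  nlinarith [abs_pos.2 hc]

def lowerUnipotent (n : ℤ) : SL(2, ℤ) := ⟨!![1, 0; n, 1], by simp [det_fin_two_of]⟩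

@[simp]
theorem coe_lowerUnipotent (n : ℤ) : ↑(lowerUnipotent n) = !![1, 0; n, 1] :=
  rfl

theorem lowerUnipotent_eq_conj (n : ℤ) : lowerUnipotent n = S * T ^ (-n) * S⁻¹ := by
  ext i j
  fin_cases i <;> fin_cases j <;> simp [coe_T_zpow, S_inv]

theorem lowerUnipotent_zpow (n j : ℤ) : lowerUnipotent n ^ j = lowerUnipotent (j * n) := by
  rw [lowerUnipotent_eq_conj, conj_zpow, ← _root_.zpow_mul, lowerUnipotent_eq_conj, neg_mul,
    mul_comm]

theorem lowerUnipotent_mul_T_zpow_mul_apply_one_zero (m k : ℤ) (γ : SL(2, ℤ)) :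
    (lowerUnipotent m * T ^ k * γ) 1 0 = γ 1 0 + m * (γ 0 0 + k * γ 1 0) := by
  simp [coe_T_zpow, mul_apply, Fin.sum_univ_two]
  ring

theorem T_mem_Gamma1 (N : ℕ) : T ∈ Gamma1 N := by
  simp [Gamma1_mem]

theorem lowerUnipotent_mem_Gamma1 {N : ℕ} {n : ℤ} (h : (N : ℤ) ∣ n) :
    lowerUnipotent n ∈ Gamma1 N := by
  rw [Gamma1_mem]
  simp [(ZMod.intCast_zmod_eq_zero_iff_dvd n N).2 h]

theorem lowerUnipotent_one_mul_T_inv_pow_three : (lowerUnipotent 1 * T⁻¹) ^ 3 = -1 := by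
  decide

theorem lowerUnipotent_two_mul_T_inv_sq : (lowerUnipotent 2 * T⁻¹) ^ 2 = -1 := by
  decide

theorem neg_one_notMem_Gamma1_three : (-1 : SL(2, ℤ)) ∉ Gamma1 3 := by
  rw [Gamma1_mem]
  decide

theorem isCoprime_apply_zero_zero_apply_one_zero (γ : SL(2, ℤ)) : IsCoprime (γ 0 0) (γ 1 0) :=
  ⟨γ 1 1, -γ 0 1, by linear_combination (det_fin_two γ.1).symm.trans γ.det_coe⟩

section Descent

variable {N : ℕ} {G : Subgroup SL(2, ℤ)}

theorem mem_of_apply_one_zero_eq_zero (hT : T ∈ G) (hneg : -1 ∈ Gamma1 N → -1 ∈ G)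
    {γ : SL(2, ℤ)} (hγ : γ ∈ Gamma1 N) (hc : γ 1 0 = 0) : γ ∈ G := by
  have had : γ 0 0 * γ 1 1 = 1 := by
    linear_combination (det_fin_two γ.1).symm.trans γ.det_coe + γ 0 1 * hc
  rcases Int.eq_one_or_neg_one_of_mul_eq_one' had with ⟨ha, hd⟩ | ⟨ha, hd⟩
  · have hγT : γ = T ^ γ 0 1 := by
      ext i j
      fin_cases i <;> fin_cases j <;> simp [coe_T_zpow, ha, hd, hc]
    exact hγT ▸ zpow_mem hT _
  · have hγT : γ * T ^ γ 0 1 = -1 := by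
      ext i j
      fin_cases i <;> fin_cases j <;> simp [coe_T_zpow, mul_apply, Fin.sum_univ_two, ha, hd, hc]
    rw [eq_mul_inv_of_mul_eq hγT]
    have hneg1 : -1 ∈ Gamma1 N := hγT ▸ mul_mem hγ (zpow_mem (T_mem_Gamma1 N) _)
    exact mul_mem (hneg hneg1) (inv_mem (zpow_mem hT _))

theorem Gamma1_le_of_T_mem_of_lowerUnipotent_mem (hN3 : N ≤ 3) (hT : T ∈ G)
    (hL : lowerUnipotent N ∈ G) (hneg : -1 ∈ Gamma1 N → -1 ∈ G) : Gamma1 N ≤ G := by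
  intro γ hγ
  induction hn : (γ 1 0).natAbs using Nat.strong_induction_on generalizing γ with
  | _ n ih =>
  by_cases hc : γ 1 0 = 0
  · exact mem_of_apply_one_zero_eq_zero hT hneg hγ hc
  have hNc : (N : ℤ) ∣ γ 1 0 :=
    (ZMod.intCast_zmod_eq_zero_iff_dvd _ N).1 ((Gamma1_mem N γ).1 hγ).2.2
  obtain ⟨k, j, hlt⟩ := exists_abs_add_mul_lt (Int.natCast_nonneg N) (by omega)
    (isCoprime_apply_zero_zero_apply_one_zero γ) hNc hc
  set g := lowerUnipotent (j * N) * T ^ k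
  have hgG : g ∈ G := mul_mem (lowerUnipotent_zpow N j ▸ zpow_mem hL j) (zpow_mem hT k)
  have hgΓ : g ∈ Gamma1 N :=
    mul_mem (lowerUnipotent_mem_Gamma1 (dvd_mul_left _ _)) (zpow_mem (T_mem_Gamma1 N) k)
  have hgγ : g * γ ∈ G := by
    refine ih _ ?_ (mul_mem hgΓ hγ) rfl
    rw [← hn, lowerUnipotent_mul_T_zpow_mul_apply_one_zero]
    zify
    simpa [mul_assoc] using hlt
  simpa using mul_mem (inv_mem hgG) hgγ

end Descent

/-- For `N ∈ {1, 2, 3}`, the subgroup of `SL₂(ℤ)` generated by `[[1,1],[0,1]]` and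
`[[1,0],[N,1]]` equals the congruence subgroup `Γ₁(N)` of matrices congruent to
`[[1,*],[0,1]]` modulo `N`. -/
theorem closure_eq_Gamma1 (N : ℕ) (hN : N ∈ ({1, 2, 3} : Set ℕ)) :
    Subgroup.closure
        ({⟨!![1, 1; 0, 1], by norm_num [Matrix.det_fin_two_of]⟩,
          ⟨!![1, 0; (N : ℤ), 1], by norm_num [Matrix.det_fin_two_of]⟩} : Set SL(2, ℤ)) =
      CongruenceSubgroup.Gamma1 N := by
  change Subgroup.closure {T, lowerUnipotent N} = Gamma1 N
  have hT : T ∈ Subgroup.closure {T, lowerUnipotent N} := Subgroup.subset_closure (.inl rfl)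
  have hL : lowerUnipotent N ∈ Subgroup.closure {T, lowerUnipotent N} :=
    Subgroup.subset_closure (.inr rfl)
  have hN3 : N ≤ 3 := by rcases hN with rfl | rfl | rfl <;> norm_num
  refine le_antisymm ((Subgroup.closure_le _).2 ?_)
    (Gamma1_le_of_T_mem_of_lowerUnipotent_mem hN3 hT hL ?_)
  · rintro _ (rfl | rfl)
    exacts [T_mem_Gamma1 N, lowerUnipotent_mem_Gamma1 dvd_rfl]
  · intro hneg
    rcases hN with rfl | rfl | rfl
    · exact lowerUnipotent_one_mul_T_inv_pow_three ▸ pow_mem (mul_mem hL (inv_mem hT)) 3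
    · exact lowerUnipotent_two_mul_T_inv_sq ▸ pow_mem (mul_mem hL (inv_mem hT)) 2
    · exact absurd hneg neg_one_notMem_Gamma1_three
end

section
/- The Hermitian dual Λ_k^∨ = {x ∈ ℂ^{n₀} : x ⋆ v ∈ ℤ[ζ_k] for all v ∈ Λ_k} satisfies (1+ζ_k)·Λ_k^∨ = Λ_k; equivalently, Λ_k^∨ = (1+ζ_k)^{−1}·ℤ[ζ_k]^{n₀}. -/
/-
Because `ζ * conj ζ = 1`, the Gram matrix factors as `G_k = (1 + conj ζ) • M` with `M` tridiagonal
over `ℤ[ζ]` (diagonal `-(1 + ζ)`, super-diagonal `1`, sub-diagonal `ζ`). If `M` is invertible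
over a conjugation-stable subring `S`, the dual of `S^n` for the Gram matrix `c • M` is
`(conj c)⁻¹ • S^n`, and `conj (1 + conj ζ) = 1 + ζ`. Expanding along the first row, the
determinants satisfy `D (n + 2) = -(1 + ζ) * D (n + 1) - ζ * D n`, whence
`D n = (-1)^n (1 + ζ + ⋯ + ζ^n)`; for `n = 2k - 2` this sum is `-ζ^(2k-1) = -ζ⁻¹`, a unit.
-/

noncomputable section

open Matrix Complex
open scoped Pointwise

/-- `ζ_k = exp(2πi/k)`, a primitive `k`-th root of unity. -/
def zetaC (k : ℕ) : ℂ := Complex.exp (2 * Real.pi * Complex.I / k)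

/-- `ℤ[ζ_k]`, the subring of `ℂ` generated by `ζ_k`. -/
def Rk (k : ℕ) : Subring ℂ := Subring.closure {zetaC k}

/-- The Hermitian form `x ⋆ y = ∑ conj(x i) * A i j * y j` attached to a Gram matrix `A`. -/
def hermF {n : ℕ} (A : Matrix (Fin n) (Fin n) ℂ) (x y : Fin n → ℂ) : ℂ :=
  ∑ i, ∑ j, (starRingEnd ℂ) (x i) * A i j * y j

/-- The tridiagonal Gram matrix `G_k`. -/
def Gmat (k n : ℕ) : Matrix (Fin n) (Fin n) ℂ :=
  Matrix.of fun i j =>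
    if i = j then -((1 + zetaC k) * (1 + (starRingEnd ℂ) (zetaC k)))
    else if (i : ℕ) + 1 = (j : ℕ) then 1 + (starRingEnd ℂ) (zetaC k)
    else if (j : ℕ) + 1 = (i : ℕ) then 1 + zetaC k
    else 0

section Tridiagonal

variable {R : Type*} [CommRing R]

def tridiag (a b c : R) (n : ℕ) : Matrix (Fin n) (Fin n) R :=
  of fun i j =>
    if i = j then a else if (i : ℕ) + 1 = j then b else if (j : ℕ) + 1 = i then c else 0

lemma tridiag_map {S : Type*} [CommRing S] (f : R →+* S) (a b c : R) (n : ℕ) :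
    (tridiag a b c n).map f = tridiag (f a) (f b) (f c) n := by
  ext i j
  simp only [tridiag, map_apply, of_apply]
  split_ifs <;> simp

lemma tridiag_submatrix_succ (a b c : R) (n : ℕ) :
    (tridiag a b c (n + 1)).submatrix Fin.succ Fin.succ = tridiag a b c n := by
  ext i j
  simp [tridiag, Fin.ext_iff]

lemma det_tridiag_submatrix_succ_succAbove_one (a b c : R) (n : ℕ) :
    ((tridiag a b c (n + 2)).submatrix Fin.succ (Fin.succAbove 1)).det =
      c * (tridiag a b c n).det := by
  have hminor : ((tridiag a b c (n + 2)).submatrix Fin.succ (Fin.succAbove 1)).submatrix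
      Fin.succ Fin.succ = tridiag a b c n := by
    ext i j
    simp [tridiag, Fin.ext_iff, Fin.succAbove, Fin.lt_def]
  rw [det_succ_column_zero, Fin.sum_univ_succ, Fin.succAbove_zero, hminor]
  simp [tridiag, Fin.succAbove]

theorem det_tridiag_succ_succ (a b c : R) (n : ℕ) :
    (tridiag a b c (n + 2)).det =
      a * (tridiag a b c (n + 1)).det - b * c * (tridiag a b c n).det := by
  have h00 : tridiag a b c (n + 2) 0 0 = a := by simp [tridiag]
  have h01 : tridiag a b c (n + 2) 0 1 = b := by simp [tridiag]
  have hrow : ∀ j : Fin n, tridiag a b c (n + 2) 0 j.succ.succ = 0 := fun j => by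
    simp [tridiag, Fin.ext_iff]
  rw [det_succ_row_zero, Fin.sum_univ_succ, Fin.sum_univ_succ, Fin.succ_zero_eq_one,
    det_tridiag_submatrix_succ_succAbove_one, Fin.succAbove_zero, tridiag_submatrix_succ]
  simp only [h00, h01, hrow, mul_zero, zero_mul, Finset.sum_const_zero, Fin.val_zero,
    Fin.val_one, pow_zero, pow_one]
  ring

theorem det_tridiag_neg_one_add_of_mul_eq (q b c : R) (hbc : b * c = q) (n : ℕ) :
    (tridiag (-(1 + q)) b c n).det = (-1) ^ n * ∑ i ∈ Finset.range (n + 1), q ^ i := by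
  induction n using Nat.twoStepInduction with
  | zero => simp
  | one => simp [tridiag, Finset.sum_range_succ, add_comm]
  | more n ih₀ ih₁ =>
    rw [det_tridiag_succ_succ, ih₀, ih₁, hbc, Finset.sum_range_succ _ (n + 2),
      Finset.sum_range_succ _ (n + 1)]
    ring

end Tridiagonal

theorem IsPrimitiveRoot.geom_sum_two_mul_sub_one {R : Type*} [CommRing R] [IsDomain R] {q : R}
    {k : ℕ} (hq : IsPrimitiveRoot q k) (hk : 1 < k) :
    ∑ i ∈ Finset.range (2 * k - 1), q ^ i = -q ^ (2 * k - 1) := by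
  have h := Finset.sum_range_succ (q ^ ·) (2 * k - 1)
  rw [Nat.sub_add_cancel (by omega), two_mul, Finset.sum_range_add] at h
  simp only [pow_add, hq.pow_eq_one, one_mul, hq.geom_sum_eq_zero hk, add_zero] at h
  rw [two_mul]
  linear_combination -h

theorem isUnit_det_tridiag_of_isPrimitiveRoot {R : Type*} [CommRing R] [IsDomain R] {q : R}
    {k : ℕ} (hq : IsPrimitiveRoot q k) (hk : 1 < k) :
    IsUnit (tridiag (-(1 + q)) 1 q (2 * k - 2)).det := by
  rw [det_tridiag_neg_one_add_of_mul_eq q 1 q (one_mul q), show 2 * k - 2 + 1 = 2 * k - 1 by omega,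
    hq.geom_sum_two_mul_sub_one hk]
  exact (isUnit_neg_one.pow _).mul ((hq.isUnit (by omega)).pow _).neg

section HermitianDual

variable (S : Subring ℂ) (n : ℕ)

def coordLattice : Set (Fin n → ℂ) := {x | ∀ i, x i ∈ S}

def hermDual (A : Matrix (Fin n) (Fin n) ℂ) : Set (Fin n → ℂ) :=
  {x | ∀ v ∈ coordLattice S n, hermF A x v ∈ S}

variable {S n}

lemma hermF_eq_vecMul_dotProduct (A : Matrix (Fin n) (Fin n) ℂ) (x y : Fin n → ℂ) :
    hermF A x y = (star x ᵥ* A) ⬝ᵥ y := by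
  simp only [hermF, vecMul, dotProduct, Finset.sum_mul]
  rw [Finset.sum_comm]
  rfl

lemma mem_hermDual_iff {A : Matrix (Fin n) (Fin n) ℂ} {x : Fin n → ℂ} :
    x ∈ hermDual S n A ↔ star x ᵥ* A ∈ coordLattice S n := by
  simp only [hermDual, coordLattice, Set.mem_ofPred_eq, hermF_eq_vecMul_dotProduct]
  constructor
  · intro h j
    simpa using h (Pi.single j 1) fun i => by
      rcases eq_or_ne i j with rfl | hij
      · simp
      · simp [hij]
  · intro h v hv
    exact Subring.sum_mem _ fun j _ => Subring.mul_mem _ (h j) (hv j)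

lemma vecMul_map_mem_coordLattice {u : Fin n → ℂ} (hu : u ∈ coordLattice S n)
    (N : Matrix (Fin n) (Fin n) S) : u ᵥ* N.map (↑) ∈ coordLattice S n := fun j =>
  show ∑ i, u i * (N i j : ℂ) ∈ S from
    Subring.sum_mem _ fun i _ => Subring.mul_mem _ (hu i) (N i j).2

lemma vecMul_map_mem_coordLattice_iff {M : Matrix (Fin n) (Fin n) S} (hM : IsUnit M.det)
    {w : Fin n → ℂ} : w ᵥ* M.map (↑) ∈ coordLattice S n ↔ w ∈ coordLattice S n := by
  refine ⟨fun h => ?_, fun h => vecMul_map_mem_coordLattice h M⟩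
  have hinv : M.map (↑) * M⁻¹.map ((↑) : S → ℂ) = 1 := by
    change M.map S.subtype * M⁻¹.map S.subtype = 1
    rw [← Matrix.map_mul (f := S.subtype), mul_nonsing_inv M hM, Matrix.map_one _ rfl rfl]
  simpa [vecMul_vecMul, hinv] using vecMul_map_mem_coordLattice h M⁻¹

lemma star_mem_coordLattice_iff (hS : ∀ z ∈ S, starRingEnd ℂ z ∈ S) {x : Fin n → ℂ} :
    star x ∈ coordLattice S n ↔ x ∈ coordLattice S n :=
  ⟨fun h i => by simpa using hS _ (h i), fun h i => hS _ (h i)⟩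

theorem conj_smul_hermDual_smul_map (hS : ∀ z ∈ S, starRingEnd ℂ z ∈ S) {c : ℂ} (hc : c ≠ 0)
    {M : Matrix (Fin n) (Fin n) S} (hM : IsUnit M.det) :
    starRingEnd ℂ c • hermDual S n (c • M.map (↑)) = coordLattice S n := by
  ext y
  have hc' : starRingEnd ℂ c ≠ 0 := (map_ne_zero _).mpr hc
  have hstar : star ((starRingEnd ℂ c)⁻¹ • y) ᵥ* (c • M.map (↑)) = star y ᵥ* M.map (↑) := by
    rw [star_smul, vecMul_smul, smul_vecMul, smul_smul]
    simp [hc]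
  rw [Set.mem_smul_set_iff_inv_smul_mem₀ hc', mem_hermDual_iff, hstar,
    vecMul_map_mem_coordLattice_iff hM, star_mem_coordLattice_iff hS]

end HermitianDual

lemma zetaC_isPrimitiveRoot {k : ℕ} (hk : k ≠ 0) : IsPrimitiveRoot (zetaC k) k :=
  Complex.isPrimitiveRoot_exp k hk

lemma zetaC_mul_conj (k : ℕ) : zetaC k * (starRingEnd ℂ) (zetaC k) = 1 := by
  rw [zetaC, ← Complex.exp_conj, ← Complex.exp_add]
  simp [div_eq_mul_inv, map_ofNat]

lemma zetaC_mem_Rk (k : ℕ) : zetaC k ∈ Rk k := Subring.subset_closure rfl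

def zetaR (k : ℕ) : Rk k := ⟨zetaC k, zetaC_mem_Rk k⟩

lemma zetaR_isPrimitiveRoot {k : ℕ} (hk : k ≠ 0) : IsPrimitiveRoot (zetaR k) k :=
  (zetaC_isPrimitiveRoot hk).of_map_of_injective (f := (Rk k).subtype) Subtype.val_injective

lemma conj_zetaC_eq_pow {k : ℕ} (hk : k ≠ 0) : starRingEnd ℂ (zetaC k) = zetaC k ^ (k - 1) := by
  have hζ := zetaC_isPrimitiveRoot hk
  apply mul_left_cancel₀ (hζ.ne_zero hk)
  rw [zetaC_mul_conj, ← pow_succ', Nat.sub_add_cancel (by omega), hζ.pow_eq_one]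

lemma conj_mem_Rk {k : ℕ} (hk : k ≠ 0) {z : ℂ} (hz : z ∈ Rk k) : starRingEnd ℂ z ∈ Rk k := by
  have h : starRingEnd ℂ z ∈ (Rk k).map (starRingEnd ℂ) := ⟨z, hz, rfl⟩
  rw [Rk, RingHom.map_closure, Set.image_singleton] at h
  refine Subring.closure_le.mpr ?_ h
  rw [Set.singleton_subset_iff, conj_zetaC_eq_pow hk]
  exact Subring.pow_mem _ (zetaC_mem_Rk k) _

lemma one_add_zetaC_ne_zero {k : ℕ} (hk : 2 < k) : 1 + zetaC k ≠ 0 := fun h =>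
  (zetaC_isPrimitiveRoot (by omega)).pow_ne_one_of_pos_of_lt two_ne_zero hk
    (by linear_combination (zetaC k - 1) * h)

lemma Gmat_eq_smul_map_tridiag (k n : ℕ) :
    Gmat k n = (1 + starRingEnd ℂ (zetaC k)) •
      (tridiag (-(1 + zetaR k)) 1 (zetaR k) n).map (↑) := by
  rw [show (tridiag (-(1 + zetaR k)) 1 (zetaR k) n).map (↑) =
    (tridiag (-(1 + zetaR k)) 1 (zetaR k) n).map (Rk k).subtype from rfl, tridiag_map]
  ext i j
  simp only [Gmat, tridiag, of_apply, Matrix.smul_apply, smul_eq_mul, Subring.coe_subtype,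
    Subring.coe_neg, Subring.coe_add, Subring.coe_one, zetaR]
  split_ifs
  · ring
  · ring
  · linear_combination -zetaC_mul_conj k
  · ring

theorem one_add_zetaC_smul_hermDual_Gmat {k : ℕ} (hk : 2 < k) :
    (1 + zetaC k) • hermDual (Rk k) (2 * k - 2) (Gmat k (2 * k - 2)) =
      coordLattice (Rk k) (2 * k - 2) := by
  have hc : 1 + starRingEnd ℂ (zetaC k) ≠ 0 := by
    simpa using (map_ne_zero (starRingEnd ℂ)).mpr (one_add_zetaC_ne_zero hk)
  rw [show 1 + zetaC k = starRingEnd ℂ (1 + starRingEnd ℂ (zetaC k)) by simp,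
    Gmat_eq_smul_map_tridiag]
  exact conj_smul_hermDual_smul_map (fun _ => conj_mem_Rk (by omega)) hc
    (isUnit_det_tridiag_of_isPrimitiveRoot (zetaR_isPrimitiveRoot (by omega)) (by omega))

/-- The Hermitian dual `Λ_k^∨` of `Λ_k = ℤ[ζ_k]^{2k−2}` with respect to the form `⋆` with
Gram matrix `G_k` satisfies `(1+ζ_k)·Λ_k^∨ = Λ_k`. -/
theorem hermitian_dual_of_Gk (k : ℕ) (hk : k ∈ ({3, 4, 6} : Set ℕ)) :
    (1 + zetaC k) •
        {x : Fin (2 * k - 2) → ℂ |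
          ∀ v : Fin (2 * k - 2) → ℂ, (∀ i, v i ∈ Rk k) →
            hermF (Gmat k (2 * k - 2)) x v ∈ Rk k} =
      {x : Fin (2 * k - 2) → ℂ | ∀ i, x i ∈ Rk k} := by
  exact one_add_zetaC_smul_hermDual_Gmat (by rcases hk with rfl | rfl | rfl <;> norm_num)

end
end

section
/- Define x · y = (2/|1+ζ_k|²)·Re(x ⋆ y) and let Λ* = {x ∈ ℂ^n : x · v ∈ ℤ for all v ∈ Λ} be the dual of Λ with respect to the real inner product ·. Then Λ = (1−ζ_k)·Λ*. -/
noncomputable section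

open Matrix Complex
open scoped Pointwise

/-- The real inner product `x · y = (2/|1+ζ_k|²) Re (x ⋆ y)`. -/
def dotF {n : ℕ} (k : ℕ) (A : Matrix (Fin n) (Fin n) ℂ) (x y : Fin n → ℂ) : ℝ :=
  2 / Complex.normSq (1 + zetaC k) * (hermF A x y).re

/-! ### Auxiliary lemmas -/

lemma zetaC_eq (k : ℕ) :
    zetaC k = ⟨Real.cos (2*Real.pi/k), Real.sin (2*Real.pi/k)⟩ := by
  have h : (2 * (Real.pi:ℂ) * Complex.I / (k:ℕ)) = ((2*Real.pi/k : ℝ):ℂ) * Complex.I := by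
    push_cast; field_simp
  rw [zetaC, h]
  apply Complex.ext
  · rw [Complex.exp_ofReal_mul_I_re]
  · rw [Complex.exp_ofReal_mul_I_im]

lemma zeta3 : zetaC 3 = ⟨-(1/2), Real.sqrt 3 / 2⟩ := by
  rw [zetaC_eq 3]
  have h : 2*Real.pi/(3:ℕ) = Real.pi - Real.pi/3 := by push_cast; ring
  rw [h]
  congr 1
  · rw [Real.cos_pi_sub, Real.cos_pi_div_three]
  · rw [Real.sin_pi_sub, Real.sin_pi_div_three]

lemma zeta4 : zetaC 4 = ⟨0, 1⟩ := by
  rw [zetaC_eq 4]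
  have h : 2*Real.pi/(4:ℕ) = Real.pi/2 := by push_cast; ring
  rw [h]
  congr 1
  · exact Real.cos_pi_div_two
  · exact Real.sin_pi_div_two

lemma zeta6 : zetaC 6 = ⟨1/2, Real.sqrt 3 / 2⟩ := by
  rw [zetaC_eq 6]
  have h : 2*Real.pi/(6:ℕ) = Real.pi/3 := by push_cast; ring
  rw [h]
  congr 1
  · exact Real.cos_pi_div_three
  · exact Real.sin_pi_div_three

lemma sqrt3_sq : Real.sqrt 3 * Real.sqrt 3 = 3 := Real.mul_self_sqrt (by norm_num)
lemma sqrt3_pos : (0:ℝ) < Real.sqrt 3 := Real.sqrt_pos.mpr (by norm_num)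

lemma mem_Rk_iff (k : ℕ) (A B : ℤ) (hsq : (zetaC k)^2 = A + B * zetaC k) (z : ℂ) :
    z ∈ Rk k ↔ ∃ m n : ℤ, z = m + n * zetaC k := by
  constructor
  · intro hz
    induction hz using Subring.closure_induction with
    | mem x hx =>
      rw [Set.mem_singleton_iff] at hx
      exact ⟨0, 1, by simp [hx]⟩
    | zero => exact ⟨0, 0, by simp⟩
    | one => exact ⟨1, 0, by simp⟩
    | add x y hx hy ihx ihy =>
      obtain ⟨m, n, rfl⟩ := ihx; obtain ⟨p, q, rfl⟩ := ihy
      exact ⟨m + p, n + q, by push_cast; ring⟩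
    | neg x hx ihx =>
      obtain ⟨m, n, rfl⟩ := ihx
      exact ⟨-m, -n, by push_cast; ring⟩
    | mul x y hx hy ihx ihy =>
      obtain ⟨m, n, rfl⟩ := ihx; obtain ⟨p, q, rfl⟩ := ihy
      refine ⟨m*p + n*q*A, m*q + n*p + n*q*B, ?_⟩
      push_cast
      linear_combination (n*q : ℂ) * hsq
  · rintro ⟨m, n, rfl⟩
    exact add_mem (intCast_mem _ m)
      (mul_mem (intCast_mem _ n) (Subring.subset_closure rfl))

lemma hermF_smul_x {n : ℕ} (A : Matrix (Fin n) (Fin n) ℂ) (c : ℂ) (x v : Fin n → ℂ) :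
    hermF A (c • x) v = (starRingEnd ℂ) c * hermF A x v := by
  unfold hermF
  rw [Finset.mul_sum]
  refine Finset.sum_congr rfl fun i _ => ?_
  rw [Finset.mul_sum]
  refine Finset.sum_congr rfl fun j _ => ?_
  simp only [Pi.smul_apply, smul_eq_mul, _root_.map_mul]
  ring

lemma hermF_smul_v {n : ℕ} (A : Matrix (Fin n) (Fin n) ℂ) (c : ℂ) (x v : Fin n → ℂ) :
    hermF A x (c • v) = c * hermF A x v := by
  unfold hermF
  rw [Finset.mul_sum]
  refine Finset.sum_congr rfl fun i _ => ?_
  rw [Finset.mul_sum]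
  refine Finset.sum_congr rfl fun j _ => ?_
  simp only [Pi.smul_apply, smul_eq_mul]
  ring

lemma aux_main (k : ℕ) (n : ℕ) (H : Matrix (Fin n) (Fin n) ℂ)
    (c : ℂ) (hc : 1 - zetaC k = c * (1 + zetaC k)) (hc0 : c ≠ 0) (h1 : 1 + zetaC k ≠ 0)
    (hA : ∀ s : ℂ, 2 / Complex.normSq (1 + zetaC k) * s.re ∈ Set.range ((↑) : ℤ → ℝ) →
        2 / Complex.normSq (1 + zetaC k) * (zetaC k * s).re ∈ Set.range ((↑) : ℤ → ℝ) →
        (starRingEnd ℂ) c * s ∈ Rk k)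
    (hB : ∀ s : ℂ, (starRingEnd ℂ) c * s ∈ Rk k →
        2 / Complex.normSq (1 + zetaC k) * s.re ∈ Set.range ((↑) : ℤ → ℝ))
    (hmod : (1 + zetaC k) •
        {x : Fin n → ℂ | ∀ v : Fin n → ℂ, (∀ i, v i ∈ Rk k) → hermF H x v ∈ Rk k} =
        {x : Fin n → ℂ | ∀ i, x i ∈ Rk k}) :
    {x : Fin n → ℂ | ∀ i, x i ∈ Rk k} =
      (1 - zetaC k) •
        {x : Fin n → ℂ | ∀ v : Fin n → ℂ, (∀ i, v i ∈ Rk k) →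
          dotF k H x v ∈ Set.range ((↑) : ℤ → ℝ)} := by
  have h2 : 1 - zetaC k ≠ 0 := by
    rw [hc]; exact mul_ne_zero hc0 h1
  rw [← hmod]
  ext y
  rw [Set.mem_smul_set_iff_inv_smul_mem₀ h1, Set.mem_smul_set_iff_inv_smul_mem₀ h2]
  have hrel : (1 + zetaC k)⁻¹ • y = c • ((1 - zetaC k)⁻¹ • y) := by
    rw [smul_smul]
    congr 1
    rw [hc, mul_inv, ← mul_assoc, mul_inv_cancel₀ hc0, one_mul]
  simp only [Set.mem_setOf_eq]
  constructor
  · intro h v hv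
    have := h v hv
    rw [hrel, hermF_smul_x] at this
    exact hB _ this
  · intro h v hv
    rw [hrel, hermF_smul_x]
    refine hA _ (h v hv) ?_
    have hv' : ∀ i, (zetaC k • v) i ∈ Rk k := fun i =>
      mul_mem (Subring.subset_closure rfl) (hv i)
    have := h (zetaC k • v) hv'
    rwa [dotF, hermF_smul_v] at this

/-! ### The case `k = 3` -/

lemma hsq3 : (zetaC 3)^2 = ((-1 : ℤ) : ℂ) + ((-1 : ℤ) : ℂ) * zetaC 3 := by
  have h := sqrt3_sq
  apply Complex.ext <;>
    simp [zeta3, pow_two, Complex.mul_re, Complex.mul_im, Complex.add_re, Complex.add_im] <;>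
    nlinarith [h]

lemma hN3 : Complex.normSq (1 + zetaC 3) = 1 := by
  have h := sqrt3_sq
  simp [zeta3, Complex.normSq_apply, Complex.add_re, Complex.add_im]
  nlinarith [h]

lemma hc3 : 1 - zetaC 3 = (⟨0, -Real.sqrt 3⟩ : ℂ) * (1 + zetaC 3) := by
  have h := sqrt3_sq
  apply Complex.ext <;>
    simp [zeta3, Complex.mul_re, Complex.mul_im, Complex.add_re, Complex.add_im,
      Complex.sub_re, Complex.sub_im] <;> nlinarith [h]

lemma hcc3 : (starRingEnd ℂ) (⟨0, -Real.sqrt 3⟩ : ℂ) = (⟨0, Real.sqrt 3⟩ : ℂ) := by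
  apply Complex.ext <;> simp

lemma hA3 : ∀ s : ℂ, 2 / Complex.normSq (1 + zetaC 3) * s.re ∈ Set.range ((↑) : ℤ → ℝ) →
    2 / Complex.normSq (1 + zetaC 3) * (zetaC 3 * s).re ∈ Set.range ((↑) : ℤ → ℝ) →
    (starRingEnd ℂ) (⟨0, -Real.sqrt 3⟩ : ℂ) * s ∈ Rk 3 := by
  intro s hp hq
  rw [hN3] at hp hq
  obtain ⟨p, hp⟩ := hp
  obtain ⟨q, hq⟩ := hq
  rw [zeta3] at hq
  simp only [Complex.mul_re] at hq
  rw [hcc3, mem_Rk_iff 3 (-1) (-1) hsq3]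
  refine ⟨p + q, p, ?_⟩
  have h := sqrt3_sq
  apply Complex.ext
  · simp [zeta3, Complex.mul_re, Complex.mul_im, Complex.add_re, Complex.add_im,
      Complex.intCast_re, Complex.intCast_im]
    push_cast
    nlinarith [h, hp, hq]
  · simp [zeta3, Complex.mul_re, Complex.mul_im, Complex.add_re, Complex.add_im,
      Complex.intCast_re, Complex.intCast_im]
    push_cast
    linear_combination (-(Real.sqrt 3)/2) * hp

lemma hB3 : ∀ s : ℂ, (starRingEnd ℂ) (⟨0, -Real.sqrt 3⟩ : ℂ) * s ∈ Rk 3 →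
    2 / Complex.normSq (1 + zetaC 3) * s.re ∈ Set.range ((↑) : ℤ → ℝ) := by
  intro s hs
  rw [hcc3, mem_Rk_iff 3 (-1) (-1) hsq3] at hs
  obtain ⟨m, n, heq⟩ := hs
  rw [hN3]
  refine ⟨n, ?_⟩
  have him := congrArg Complex.im heq
  simp [zeta3, Complex.mul_im, Complex.add_im, Complex.intCast_im] at him
  have h := sqrt3_sq
  have h0 := sqrt3_pos
  nlinarith [him]

/-! ### The case `k = 4` -/

lemma hsq4 : (zetaC 4)^2 = ((-1 : ℤ) : ℂ) + ((0 : ℤ) : ℂ) * zetaC 4 := by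
  apply Complex.ext <;>
    simp [zeta4, pow_two, Complex.mul_re, Complex.mul_im, Complex.add_re, Complex.add_im]

lemma hN4 : Complex.normSq (1 + zetaC 4) = 2 := by
  simp [zeta4, Complex.normSq_apply, Complex.add_re, Complex.add_im]
  norm_num

lemma hc4 : 1 - zetaC 4 = (⟨0, -1⟩ : ℂ) * (1 + zetaC 4) := by
  apply Complex.ext <;>
    simp [zeta4, Complex.mul_re, Complex.mul_im, Complex.add_re, Complex.add_im,
      Complex.sub_re, Complex.sub_im]

lemma hcc4 : (starRingEnd ℂ) (⟨0, -1⟩ : ℂ) = (⟨0, 1⟩ : ℂ) := by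
  apply Complex.ext <;> simp

lemma hA4 : ∀ s : ℂ, 2 / Complex.normSq (1 + zetaC 4) * s.re ∈ Set.range ((↑) : ℤ → ℝ) →
    2 / Complex.normSq (1 + zetaC 4) * (zetaC 4 * s).re ∈ Set.range ((↑) : ℤ → ℝ) →
    (starRingEnd ℂ) (⟨0, -1⟩ : ℂ) * s ∈ Rk 4 := by
  intro s hp hq
  rw [hN4] at hp hq
  obtain ⟨p, hp⟩ := hp
  obtain ⟨q, hq⟩ := hq
  rw [zeta4] at hq
  simp only [Complex.mul_re] at hq
  rw [hcc4, mem_Rk_iff 4 (-1) 0 hsq4]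
  refine ⟨q, p, ?_⟩
  apply Complex.ext
  · simp [zeta4, Complex.mul_re, Complex.mul_im, Complex.add_re, Complex.add_im]
    push_cast
    linarith [hp, hq]
  · simp [zeta4, Complex.mul_re, Complex.mul_im, Complex.add_re, Complex.add_im]
    push_cast
    linarith [hp, hq]

lemma hB4 : ∀ s : ℂ, (starRingEnd ℂ) (⟨0, -1⟩ : ℂ) * s ∈ Rk 4 →
    2 / Complex.normSq (1 + zetaC 4) * s.re ∈ Set.range ((↑) : ℤ → ℝ) := by
  intro s hs
  rw [hcc4, mem_Rk_iff 4 (-1) 0 hsq4] at hs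
  obtain ⟨m, n, heq⟩ := hs
  rw [hN4]
  refine ⟨n, ?_⟩
  have him := congrArg Complex.im heq
  simp [zeta4, Complex.mul_im, Complex.add_im] at him
  linarith [him]

/-! ### The case `k = 6` -/

lemma hsq6 : (zetaC 6)^2 = ((-1 : ℤ) : ℂ) + ((1 : ℤ) : ℂ) * zetaC 6 := by
  have h := sqrt3_sq
  apply Complex.ext <;>
    simp [zeta6, pow_two, Complex.mul_re, Complex.mul_im, Complex.add_re, Complex.add_im] <;>
    nlinarith [h]

lemma hN6 : Complex.normSq (1 + zetaC 6) = 3 := by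
  have h := sqrt3_sq
  simp [zeta6, Complex.normSq_apply, Complex.add_re, Complex.add_im]
  nlinarith [h]

lemma hc6 : 1 - zetaC 6 = (⟨0, -(Real.sqrt 3)/3⟩ : ℂ) * (1 + zetaC 6) := by
  have h := sqrt3_sq
  apply Complex.ext <;>
    simp [zeta6, Complex.mul_re, Complex.mul_im, Complex.add_re, Complex.add_im,
      Complex.sub_re, Complex.sub_im] <;> nlinarith [h]

lemma hcc6 : (starRingEnd ℂ) (⟨0, -(Real.sqrt 3)/3⟩ : ℂ) = (⟨0, Real.sqrt 3/3⟩ : ℂ) := by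
  apply Complex.ext <;> simp <;> ring

lemma hA6 : ∀ s : ℂ, 2 / Complex.normSq (1 + zetaC 6) * s.re ∈ Set.range ((↑) : ℤ → ℝ) →
    2 / Complex.normSq (1 + zetaC 6) * (zetaC 6 * s).re ∈ Set.range ((↑) : ℤ → ℝ) →
    (starRingEnd ℂ) (⟨0, -(Real.sqrt 3)/3⟩ : ℂ) * s ∈ Rk 6 := by
  intro s hp hq
  rw [hN6] at hp hq
  obtain ⟨p, hp⟩ := hp
  obtain ⟨q, hq⟩ := hq
  rw [zeta6] at hq
  simp only [Complex.mul_re] at hq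
  rw [hcc6, mem_Rk_iff 6 (-1) 1 hsq6]
  refine ⟨q - p, p, ?_⟩
  have h := sqrt3_sq
  apply Complex.ext
  · simp [zeta6, Complex.mul_re, Complex.mul_im, Complex.add_re, Complex.add_im]
    push_cast
    nlinarith [h, hp, hq]
  · simp [zeta6, Complex.mul_re, Complex.mul_im, Complex.add_re, Complex.add_im]
    push_cast
    linear_combination (-(Real.sqrt 3)/2) * hp

lemma hB6 : ∀ s : ℂ, (starRingEnd ℂ) (⟨0, -(Real.sqrt 3)/3⟩ : ℂ) * s ∈ Rk 6 →
    2 / Complex.normSq (1 + zetaC 6) * s.re ∈ Set.range ((↑) : ℤ → ℝ) := by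
  intro s hs
  rw [hcc6, mem_Rk_iff 6 (-1) 1 hsq6] at hs
  obtain ⟨m, n, heq⟩ := hs
  rw [hN6]
  refine ⟨n, ?_⟩
  have him := congrArg Complex.im heq
  simp [zeta6, Complex.mul_im, Complex.add_im] at him
  have h := sqrt3_sq
  have h0 := sqrt3_pos
  nlinarith [him]

/-! ### Nonvanishing -/

lemma h1ne (k : ℕ) (N : ℝ) (hN : Complex.normSq (1 + zetaC k) = N) (hN0 : N ≠ 0) :
    1 + zetaC k ≠ 0 := by
  intro h
  rw [h, map_zero] at hN
  exact hN0 hN.symm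

lemma hc0_3 : (⟨0, -Real.sqrt 3⟩ : ℂ) ≠ 0 := by
  intro h
  have := congrArg Complex.im h
  simp at this

lemma hc0_4 : (⟨0, -1⟩ : ℂ) ≠ 0 := by
  intro h
  have := congrArg Complex.im h
  simp at this

lemma hc0_6 : (⟨0, -(Real.sqrt 3)/3⟩ : ℂ) ≠ 0 := by
  intro h
  have := congrArg Complex.im h
  simp at this

/-- Let `Λ = ℤ[ζ_k]^n` be a `(1+ζ_k)`-modular Hermitian lattice with Gram matrix `H`, and
let `x · y = (2/|1+ζ_k|²) Re(x ⋆ y)`.  Then `Λ = (1−ζ_k)·Λ*`, where `Λ*` is the dual of `Λ`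
with respect to the real inner product `·`. -/
theorem real_dual_of_modular_lattice (k : ℕ) (hk : k ∈ ({3, 4, 6} : Set ℕ))
    (n : ℕ) (hn : 1 ≤ n)
    (H : Matrix (Fin n) (Fin n) ℂ)
    (hentries : ∀ i j, H i j ∈ Rk k)
    (hherm : H.IsHermitian)
    (hinv : IsUnit H.det)
    (hmod : (1 + zetaC k) •
        {x : Fin n → ℂ | ∀ v : Fin n → ℂ, (∀ i, v i ∈ Rk k) → hermF H x v ∈ Rk k} =
        {x : Fin n → ℂ | ∀ i, x i ∈ Rk k}) :
    {x : Fin n → ℂ | ∀ i, x i ∈ Rk k} =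
      (1 - zetaC k) •
        {x : Fin n → ℂ | ∀ v : Fin n → ℂ, (∀ i, v i ∈ Rk k) →
          dotF k H x v ∈ Set.range ((↑) : ℤ → ℝ)} := by
  simp only [Set.mem_insert_iff, Set.mem_singleton_iff] at hk
  rcases hk with rfl | rfl | rfl
  · exact aux_main 3 n H _ hc3 hc0_3 (h1ne 3 1 hN3 one_ne_zero) hA3 hB3 hmod
  · exact aux_main 4 n H _ hc4 hc0_4 (h1ne 4 2 hN4 two_ne_zero) hA4 hB4 hmod
  · exact aux_main 6 n H _ hc6 hc0_6 (h1ne 6 3 hN6 three_ne_zero) hA6 hB6 hmod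

end
end

section
/- The group U(L) of ℤ[i]-module automorphisms of L preserving the Hermitian form h has order exactly 96 = 2⁵·3. -/
set_option synthInstance.maxHeartbeats 1000000
set_option maxHeartbeats 1000000

noncomputable section

open Complex

/-- The Gaussian integers `ℤ[i]`, as a subring of `ℂ`. -/
def RI : Subring ℂ := Subring.closure {Complex.I}

/-- The lattice `L = {(a,b) ∈ ℤ[i]² : a − b ∈ (1+i)ℤ[i]}`, as a `ℤ[i]`-submodule of `ℂ²`. -/
def Lsub : Submodule ↥RI (Fin 2 → ℂ) where
  carrier := {v | (∀ i, v i ∈ RI) ∧ ∃ c ∈ RI, v 0 - v 1 = (1 + Complex.I) * c}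
  add_mem' := by
    rintro v w ⟨hv, c, hc, hvc⟩ ⟨hw, d, hd, hwd⟩
    refine ⟨fun i => RI.add_mem (hv i) (hw i), c + d, RI.add_mem hc hd, ?_⟩
    simp only [Pi.add_apply]
    linear_combination hvc + hwd
  zero_mem' := ⟨fun _ => RI.zero_mem, 0, RI.zero_mem, by simp⟩
  smul_mem' := by
    rintro a v ⟨hv, c, hc, hvc⟩
    refine ⟨fun i => ?_, (a : ℂ) * c, RI.mul_mem a.2 hc, ?_⟩
    · show (a • v) i ∈ RI
      rw [Pi.smul_apply]
      exact RI.mul_mem a.2 (hv i)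
    · show (a • v) 0 - (a • v) 1 = _
      rw [Pi.smul_apply, Pi.smul_apply]
      show (a : ℂ) * v 0 - (a : ℂ) * v 1 = _
      linear_combination (a : ℂ) * hvc

/-- The negative-definite Hermitian form `h((a,b),(a',b')) = −(conj(a)a' + conj(b)b')`. -/
def hForm (x y : Fin 2 → ℂ) : ℂ :=
  -((starRingEnd ℂ) (x 0) * y 0 + (starRingEnd ℂ) (x 1) * y 1)

/-!
In the basis `(1, 1)`, `(1 + i, 0)` of `L` over `ℤ[i]`, the form `-h` has Gram matrix
`G = !![2, 1 + i; 1 - i, 2]`, of determinant `2`. An automorphism of `L` preserving `h` is thus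
the same as a matrix `B` over `ℤ[i]` with `Bᴴ G B = G`; such a `B` has `|det B|² = 1`, so it is
invertible. The columns of `B` are vectors of `G`-norm `2`, whose entries lie in
`{-1, 0, 1} + {-1, 0, 1} i`, so the solutions can be enumerated.
-/

open GaussianInt Matrix Module

theorem Matrix.star_mulVec_dotProduct_mulVec {m n R : Type*} [Fintype m] [Fintype n]
    [NonUnitalSemiring R] [StarRing R] (M : Matrix m n R) (A : Matrix m m R) (u v : n → R) :
    star (M *ᵥ u) ⬝ᵥ A *ᵥ (M *ᵥ v) = star u ⬝ᵥ (Mᴴ * A * M) *ᵥ v := by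
  rw [star_mulVec, ← dotProduct_mulVec, mulVec_mulVec, mulVec_mulVec, Matrix.mul_assoc]

theorem Matrix.conjTranspose_mul_mul_apply {m n R : Type*} [Fintype n] [NonUnitalSemiring R]
    [Star R] (B : Matrix n m R) (A : Matrix n n R) (i j : m) :
    (Bᴴ * A * B) i j = star (Bᵀ i) ⬝ᵥ A *ᵥ Bᵀ j := by
  simp only [Matrix.mul_apply, dotProduct, mulVec, conjTranspose_apply, transpose_apply,
    Pi.star_apply, Finset.sum_mul, Finset.mul_sum, mul_assoc]
  exact Finset.sum_comm

theorem Matrix.isUnit_det_of_conjTranspose_mul_mul_eq {n R : Type*} [Fintype n] [DecidableEq n]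
    [CommRing R] [StarRing R] [IsDomain R] {B G : Matrix n n R} (hG : G.det ≠ 0)
    (h : Bᴴ * G * B = G) : IsUnit B.det := by
  have hdet := congrArg det h
  rw [det_mul, det_mul, det_conjTranspose] at hdet
  have hB : B.det * star B.det = 1 :=
    mul_left_cancel₀ hG (by linear_combination hdet)
  exact .of_mul_eq_one _ hB

theorem RingHom.map_star_dotProduct_mulVec {n R S : Type*} [Fintype n] [NonAssocSemiring R]
    [Star R] [NonAssocSemiring S] [Star S] (f : R →+* S) (hf : ∀ r, f (star r) = star (f r))
    (A : Matrix n n R) (u v : n → R) :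
    f (star u ⬝ᵥ A *ᵥ v) = star (f ∘ u) ⬝ᵥ A.map f *ᵥ (f ∘ v) := by
  rw [RingHom.map_dotProduct]
  congr 1
  · funext i
    exact hf (u i)
  · funext i
    exact RingHom.map_mulVec f A v i

theorem I_mem_RI : I ∈ RI := Subring.subset_closure rfl

theorem RI_eq_toComplex_range : RI = GaussianInt.toComplex.range := by
  refine le_antisymm (Subring.closure_le.2 ?_) ?_
  · rintro _ rfl
    exact ⟨⟨0, 1⟩, by simp [toComplex_def']⟩
  · rintro _ ⟨z, rfl⟩
    rw [toComplex_def]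
    exact RI.add_mem (intCast_mem RI _) (RI.mul_mem (intCast_mem RI _) I_mem_RI)

def gaussianIntEquivRI : GaussianInt ≃+* RI :=
  (RingEquiv.ofBijective toComplex.rangeRestrict
    ⟨fun _ _ h => toComplex_injective (congrArg Subtype.val h),
      toComplex.rangeRestrict_surjective⟩).trans
    (RingEquiv.subringCongr RI_eq_toComplex_range.symm)

theorem toComplex_gaussianIntEquivRI_symm (r : RI) : (gaussianIntEquivRI.symm r : ℂ) = r := by
  conv_rhs => rw [← gaussianIntEquivRI.apply_symm_apply r]
  rfl

def latticeMatrix : Matrix (Fin 2) (Fin 2) ℂ := !![1, 1 + I; 1, 0]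

theorem latticeMatrix_mulVec (u : Fin 2 → ℂ) :
    latticeMatrix *ᵥ u = ![u 0 + (1 + I) * u 1, u 0] := by
  ext i
  fin_cases i <;> simp [latticeMatrix, mulVec, dotProduct, Fin.sum_univ_two]

theorem latticeMatrix_mulVec_mem_Lsub (c : Fin 2 → RI) :
    latticeMatrix *ᵥ (fun i => (c i : ℂ)) ∈ Lsub := by
  rw [latticeMatrix_mulVec]
  refine ⟨fun i => ?_, c 1, (c 1).2, by simp⟩
  fin_cases i
  · exact RI.add_mem (c 0).2 (RI.mul_mem (RI.add_mem RI.one_mem I_mem_RI) (c 1).2)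
  · exact (c 0).2

def toLsub : (Fin 2 → RI) →ₗ[RI] Lsub where
  toFun c := ⟨_, latticeMatrix_mulVec_mem_Lsub c⟩
  map_add' c d := Subtype.ext <| by
    rw [Submodule.coe_add, ← mulVec_add]
    rfl
  map_smul' a c := Subtype.ext <| by
    rw [Submodule.coe_smul, ← mulVec_smul]
    rfl

theorem toLsub_bijective : Function.Bijective toLsub := by
  constructor
  · intro c d h
    have hP : IsUnit latticeMatrix := by
      rw [isUnit_iff_isUnit_det, latticeMatrix, det_fin_two_of, isUnit_iff_ne_zero]
      intro h0
      simpa using congrArg Complex.im h0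
    have hcd : latticeMatrix *ᵥ (fun i => (c i : ℂ)) = latticeMatrix *ᵥ (fun i => (d i : ℂ)) :=
      congrArg Subtype.val h
    funext i
    exact Subtype.ext (congrFun (mulVec_injective_of_isUnit hP hcd) i)
  · rintro ⟨x, hx, c, hc, hxc⟩
    refine ⟨![⟨x 1, hx 1⟩, ⟨c, hc⟩], Subtype.ext ?_⟩
    change latticeMatrix *ᵥ ![x 1, c] = x
    rw [latticeMatrix_mulVec]
    ext i
    fin_cases i
    · simp only [Fin.zero_eta, cons_val_zero, cons_val_one]
      linear_combination -hxc
    · rfl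

def latticeBasis : Basis (Fin 2) RI Lsub :=
  .ofEquivFun (LinearEquiv.ofBijective toLsub toLsub_bijective).symm

def latticeCoords (x : Lsub) : Fin 2 → GaussianInt :=
  fun i => gaussianIntEquivRI.symm (latticeBasis.repr x i)

theorem coe_eq_latticeMatrix_mulVec (x : Lsub) :
    (x : Fin 2 → ℂ) = latticeMatrix *ᵥ (toComplex ∘ latticeCoords x) := by
  have hx : toLsub (latticeBasis.equivFun x) = x :=
    (LinearEquiv.ofBijective toLsub toLsub_bijective).apply_symm_apply x
  conv_lhs => rw [← hx]
  exact congrArg (latticeMatrix *ᵥ ·) (funext fun i => (toComplex_gaussianIntEquivRI_symm _).symm)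

theorem latticeCoords_latticeBasis (i : Fin 2) :
    latticeCoords (latticeBasis i) = Pi.single i 1 := by
  funext j
  simp [latticeCoords, Finsupp.single_apply, Pi.single_apply, eq_comm]

def latticeGram : Matrix (Fin 2) (Fin 2) GaussianInt := !![2, ⟨1, 1⟩; ⟨1, -1⟩, 2]

theorem latticeGram_map : latticeGram.map toComplex = latticeMatrixᴴ * 1 * latticeMatrix := by
  ext i j
  fin_cases i <;> fin_cases j <;>
    simp [latticeGram, latticeMatrix, toComplex_def', Matrix.mul_apply, Fin.sum_univ_two,
      map_ofNat]
  · norm_num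
  · linear_combination I_sq

theorem hForm_eq_neg_star_dotProduct (x y : Fin 2 → ℂ) : hForm x y = -(star x ⬝ᵥ y) := by
  simp [hForm, dotProduct, Fin.sum_univ_two]

theorem hForm_eq_latticeGram (x y : Lsub) :
    hForm x y = -toComplex (star (latticeCoords x) ⬝ᵥ latticeGram *ᵥ latticeCoords y) := by
  rw [hForm_eq_neg_star_dotProduct, coe_eq_latticeMatrix_mulVec x, coe_eq_latticeMatrix_mulVec y,
    ← one_mulVec (latticeMatrix *ᵥ (toComplex ∘ latticeCoords y)), star_mulVec_dotProduct_mulVec,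
    ← latticeGram_map, RingHom.map_star_dotProduct_mulVec _ toComplex_star]

def endMatrixEquiv : (Lsub →ₗ[RI] Lsub) ≃ Matrix (Fin 2) (Fin 2) GaussianInt :=
  (LinearMap.toMatrix latticeBasis latticeBasis).toEquiv.trans
    gaussianIntEquivRI.symm.mapMatrix.toEquiv

theorem latticeCoords_apply (f : Lsub →ₗ[RI] Lsub) (x : Lsub) :
    latticeCoords (f x) = endMatrixEquiv f *ᵥ latticeCoords x := by
  funext i
  rw [latticeCoords, ← LinearMap.toMatrix_mulVec_repr latticeBasis latticeBasis f x]
  exact RingHom.map_mulVec (gaussianIntEquivRI.symm : RI →+* GaussianInt) _ _ i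

theorem forall_hForm_map_eq_iff (f : Lsub →ₗ[RI] Lsub) :
    (∀ x y, hForm (f x) (f y) = hForm x y) ↔
      (endMatrixEquiv f)ᴴ * latticeGram * endMatrixEquiv f = latticeGram := by
  simp only [hForm_eq_latticeGram, latticeCoords_apply, star_mulVec_dotProduct_mulVec, neg_inj,
    toComplex_inj]
  refine ⟨fun h => ext fun i j => ?_, fun h x y => by rw [h]⟩
  simpa [latticeCoords_latticeBasis, mulVec_single_one] using h (latticeBasis i) (latticeBasis j)

theorem exists_linearEquiv_endMatrixEquiv_eq {B : Matrix (Fin 2) (Fin 2) GaussianInt}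
    (hB : IsUnit B.det) : ∃ φ : Lsub ≃ₗ[RI] Lsub, endMatrixEquiv φ = B := by
  have hA : IsUnit (B.map gaussianIntEquivRI).det :=
    RingHom.map_det (gaussianIntEquivRI : GaussianInt →+* RI) B ▸ hB.map _
  refine ⟨toLinearEquiv latticeBasis _ hA, ?_⟩
  have hφ : (toLinearEquiv latticeBasis _ hA : Lsub →ₗ[RI] Lsub) =
      toLin latticeBasis latticeBasis (B.map gaussianIntEquivRI) := rfl
  simp [hφ, endMatrixEquiv, Function.comp_def]

def unitBox : Finset GaussianInt :=
  (Finset.Icc (-1 : ℤ) 1 ×ˢ Finset.Icc (-1 : ℤ) 1).image fun p => ⟨p.1, p.2⟩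

theorem mem_unitBox {z : GaussianInt} :
    z ∈ unitBox ↔ z.re ∈ Finset.Icc (-1) 1 ∧ z.im ∈ Finset.Icc (-1) 1 := by
  simp only [unitBox, Finset.mem_image, Finset.mem_product]
  exact ⟨fun ⟨p, hp, hpz⟩ => hpz ▸ hp, fun hz => ⟨(z.re, z.im), hz, rfl⟩⟩

theorem mem_unitBox_of_star_dotProduct_latticeGram_eq_two {v : Fin 2 → GaussianInt}
    (hv : star v ⬝ᵥ latticeGram *ᵥ v = 2) (i : Fin 2) : v i ∈ unitBox := by
  have h := congrArg Zsqrtd.re hv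
  simp only [dotProduct, Pi.star_apply, mulVec, latticeGram, of_apply, cons_val', cons_val_fin_one,
    Fin.sum_univ_two, cons_val_zero, cons_val_one, Zsqrtd.re_add, Zsqrtd.re_mul, Zsqrtd.re_star,
    Zsqrtd.re_ofNat, Nat.cast_ofNat, Zsqrtd.im_ofNat, mul_zero, zero_mul, add_zero, one_mul,
    mul_one, neg_mul, Zsqrtd.im_star, mul_neg, neg_neg, Zsqrtd.im_add, Zsqrtd.im_mul] at h
  -- `p + q i` and `v 0` are the coordinates of `latticeMatrix *ᵥ v`, whose squared norm is `2`.
  set p := (v 0).re + (v 1).re - (v 1).im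
  set q := (v 0).im + (v 1).re + (v 1).im
  have hsq : p ^ 2 + q ^ 2 + (v 0).re ^ 2 + (v 0).im ^ 2 = 2 := by linear_combination h
  revert i
  simp only [Fin.forall_fin_two, mem_unitBox, Finset.mem_Icc]
  refine ⟨⟨⟨?_, ?_⟩, ?_, ?_⟩, ⟨?_, ?_⟩, ?_, ?_⟩ <;>
    nlinarith [sq_nonneg (p - 1), sq_nonneg (p + 1), sq_nonneg (q - 1), sq_nonneg (q + 1),
      sq_nonneg ((v 0).re - 1), sq_nonneg ((v 0).re + 1), sq_nonneg ((v 0).im - 1),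
      sq_nonneg ((v 0).im + 1)]

def minimalVectors : Finset (Fin 2 → GaussianInt) :=
  (Fintype.piFinset fun _ => unitBox).filter fun v => star v ⬝ᵥ latticeGram *ᵥ v = 2

/-- Only matrices whose columns lie in `minimalVectors` are tested, which keeps `decide` cheap. -/
def unitaryFinset : Finset (Matrix (Fin 2) (Fin 2) GaussianInt) :=
  ((Fintype.piFinset fun _ => minimalVectors).map
    (of.trans (transposeAddEquiv _ _ _).toEquiv).toEmbedding).filter
    fun B => Bᴴ * latticeGram * B = latticeGram

set_option maxRecDepth 100000 in
theorem card_unitaryFinset : unitaryFinset.card = 96 := by decide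

theorem mem_unitaryFinset {B : Matrix (Fin 2) (Fin 2) GaussianInt} :
    B ∈ unitaryFinset ↔ Bᴴ * latticeGram * B = latticeGram := by
  rw [unitaryFinset, Finset.mem_filter, Finset.mem_map_equiv, Fintype.mem_piFinset]
  refine ⟨And.right, fun hB => ⟨fun j => ?_, hB⟩⟩
  have hj : star (Bᵀ j) ⬝ᵥ latticeGram *ᵥ Bᵀ j = 2 := by
    rw [← conjTranspose_mul_mul_apply, hB]
    fin_cases j <;> rfl
  exact Finset.mem_filter.2
    ⟨Fintype.mem_piFinset.2 (mem_unitBox_of_star_dotProduct_latticeGram_eq_two hj), hj⟩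

theorem card_unitary_latticeGram :
    Nat.card {B : Matrix (Fin 2) (Fin 2) GaussianInt // Bᴴ * latticeGram * B = latticeGram} =
      96 := by
  rw [← card_unitaryFinset, ← Nat.card_eq_finsetCard]
  exact Nat.card_congr (Equiv.subtypeEquivRight fun _ => mem_unitaryFinset.symm)

/-- The group `U(L)` of `ℤ[i]`-module automorphisms of `L` preserving the Hermitian form
`h` has order exactly `96 = 2⁵·3`. -/
theorem card_unitary_L :
    Nat.card {φ : Lsub ≃ₗ[↥RI] Lsub //
      ∀ x y : Lsub, hForm (φ x) (φ y) = hForm x y} = 96 := by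
  rw [← card_unitary_latticeGram]
  refine Nat.card_congr (.ofBijective
    (fun φ => ⟨endMatrixEquiv φ.1, (forall_hForm_map_eq_iff _).1 φ.2⟩)
    ⟨fun φ ψ h => ?_, fun B => ?_⟩)
  · exact Subtype.ext (LinearEquiv.toLinearMap_injective
      (endMatrixEquiv.injective (congrArg Subtype.val h)))
  · have hdet : IsUnit B.1.det :=
      isUnit_det_of_conjTranspose_mul_mul_eq (by decide) B.2
    obtain ⟨φ, hφ⟩ := exists_linearEquiv_endMatrixEquiv_eq hdet
    exact ⟨⟨φ, (forall_hForm_map_eq_iff _).2 (hφ ▸ B.2)⟩, Subtype.ext hφ⟩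
end
end

section
/- The set {v ∈ L : h(v,v) = −2} has exactly 24 elements. -/
noncomputable section

open Complex

theorem mem_RI {z : ℂ} : z ∈ RI ↔ ∃ m n : ℤ, z = m + n * I := by
  constructor
  · intro hz
    induction hz using Subring.closure_induction with
    | mem x hx => exact ⟨0, 1, by simp at hx; simp [hx]⟩
    | zero => exact ⟨0, 0, by simp⟩
    | one => exact ⟨1, 0, by simp⟩
    | add x y hx hy ihx ihy =>
      obtain ⟨m, n, rfl⟩ := ihx; obtain ⟨p, q, rfl⟩ := ihy
      exact ⟨m + p, n + q, by push_cast; ring⟩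
    | neg x hx ihx =>
      obtain ⟨m, n, rfl⟩ := ihx
      exact ⟨-m, -n, by push_cast; ring⟩
    | mul x y hx hy ihx ihy =>
      obtain ⟨m, n, rfl⟩ := ihx; obtain ⟨p, q, rfl⟩ := ihy
      exact ⟨m * p - n * q, m * q + n * p, by push_cast; linear_combination (n*q : ℂ) * Complex.I_sq⟩
  · rintro ⟨m, n, rfl⟩
    exact RI.add_mem (intCast_mem RI m) (RI.mul_mem (intCast_mem RI n) (Subring.subset_closure rfl))

theorem parts_eq {a b c d : ℤ} (h : (a:ℂ) + b * I = c + d * I) : a = c ∧ b = d := by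
  have h1 := congrArg Complex.re h
  have h2 := congrArg Complex.im h
  simp at h1 h2
  exact ⟨by exact_mod_cast h1, by exact_mod_cast h2⟩

def Pcond (x : ℤ × ℤ × ℤ × ℤ) : Prop :=
  x.1^2 + x.2.1^2 + x.2.2.1^2 + x.2.2.2^2 = 2 ∧ Even (x.1 + x.2.1 + x.2.2.1 + x.2.2.2)

instance : DecidablePred Pcond := fun x => by unfold Pcond; infer_instance

theorem card_Pcond : Nat.card {x // Pcond x} = 24 := by
  have hset : {x | Pcond x} = ↑((Finset.Icc ((-1,-1,-1,-1) : ℤ×ℤ×ℤ×ℤ) (1,1,1,1)).filter Pcond) := by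
    ext ⟨a, b, c, d⟩
    simp only [Set.mem_setOf_eq, Finset.coe_filter, Finset.mem_Icc, Prod.le_def]
    constructor
    · rintro ⟨h1, h2⟩
      refine ⟨⟨⟨?_, ?_, ?_, ?_⟩, ?_, ?_, ?_, ?_⟩, h1, h2⟩ <;>
        nlinarith [sq_nonneg a, sq_nonneg b, sq_nonneg c, sq_nonneg d]
    · exact fun h => h.2
  have h0 : Nat.card {x // Pcond x} = Set.ncard {x | Pcond x} := Nat.card_coe_set_eq _
  rw [h0, hset, Set.ncard_coe_finset]
  decide

def toVec (x : ℤ × ℤ × ℤ × ℤ) : Fin 2 → ℂ :=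
  ![(x.1 : ℂ) + x.2.1 * I, (x.2.2.1 : ℂ) + x.2.2.2 * I]

theorem toVec_memL {x : ℤ × ℤ × ℤ × ℤ} (hx : Pcond x) : toVec x ∈ Lsub := by
  obtain ⟨a, b, c, d⟩ := x
  obtain ⟨h1, h2⟩ := hx
  dsimp only at h1 h2
  have hev : ∃ k, (a - c) + (b - d) = k + k := by
    obtain ⟨k, hk⟩ := h2
    exact ⟨k - c - d, by omega⟩
  obtain ⟨k, hk⟩ := hev
  refine ⟨fun i => ?_, (k : ℂ) + (b - d - k : ℤ) * I, mem_RI.mpr ⟨k, b - d - k, rfl⟩, ?_⟩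
  · fin_cases i
    · exact mem_RI.mpr ⟨a, b, rfl⟩
    · exact mem_RI.mpr ⟨c, d, rfl⟩
  · show toVec (a,b,c,d) 0 - toVec (a,b,c,d) 1 = _
    simp only [toVec, Matrix.cons_val_zero, Matrix.cons_val_one, Matrix.head_cons]
    have hk' : (a : ℂ) - c + (b - d) = k + k := by exact_mod_cast hk
    push_cast
    linear_combination hk' + (-(b:ℂ) + d + k) * Complex.I_sq

theorem toVec_hForm {x : ℤ × ℤ × ℤ × ℤ} (hx : Pcond x) : hForm (toVec x) (toVec x) = -2 := by
  obtain ⟨a, b, c, d⟩ := x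
  have h1 : ((a:ℂ)^2 + b^2 + c^2 + d^2) = 2 := by exact_mod_cast hx.1
  simp only [hForm, toVec, Matrix.cons_val_zero, Matrix.cons_val_one, Matrix.head_cons,
    map_add, map_mul, Complex.conj_I, map_intCast]
  linear_combination -h1 + ((b:ℂ)^2 + (d:ℂ)^2) * Complex.I_sq


/-- The set `{v ∈ L : h(v,v) = −2}` has exactly `24` elements. -/
theorem card_norm_two_vectors_L :
    Nat.card {v : Lsub // hForm v v = -2} = 24 := by
  rw [← card_Pcond]
  refine (Nat.card_eq_of_bijective
    (fun x : {x // Pcond x} => (⟨⟨toVec x.1, toVec_memL x.2⟩, toVec_hForm x.2⟩ :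
      {v : Lsub // hForm v v = -2})) ⟨?_, ?_⟩).symm
  · rintro ⟨⟨a, b, c, d⟩, hx⟩ ⟨⟨a', b', c', d'⟩, hy⟩ h
    have h' := congrArg (fun w : {v : Lsub // hForm v v = -2} => ((w : Lsub) : Fin 2 → ℂ)) h
    have h0 := congrFun h' 0
    have h1 := congrFun h' 1
    simp only [toVec, Matrix.cons_val_zero, Matrix.cons_val_one, Matrix.head_cons] at h0 h1
    obtain ⟨e1, e2⟩ := parts_eq h0
    obtain ⟨e3, e4⟩ := parts_eq h1
    exact Subtype.ext (by simp [e1, e2, e3, e4])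
  · rintro ⟨⟨v, hv⟩, h2⟩
    obtain ⟨hvRI, e, heRI, hdiff⟩ := hv
    obtain ⟨m, n, hv0⟩ := mem_RI.mp (hvRI 0)
    obtain ⟨p, q, hv1⟩ := mem_RI.mp (hvRI 1)
    obtain ⟨s, t, he⟩ := mem_RI.mp heRI
    have hsq : m^2 + n^2 + p^2 + q^2 = 2 := by
      have hE : -((starRingEnd ℂ) (v 0) * v 0 + (starRingEnd ℂ) (v 1) * v 1) = -2 := h2
      rw [hv0, hv1] at hE
      simp only [map_add, map_mul, Complex.conj_I, map_intCast] at hE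
      have : ((m^2 + n^2 + p^2 + q^2 : ℤ) : ℂ) = ((2:ℤ) : ℂ) := by
        push_cast
        linear_combination -hE + ((n:ℂ)^2 + (q:ℂ)^2) * Complex.I_sq
      exact_mod_cast this
    have hev : Even (m + n + p + q) := by
      rw [hv0, hv1, he] at hdiff
      have : ((m - p : ℤ) : ℂ) + ((n - q : ℤ) : ℂ) * I = ((s - t : ℤ) : ℂ) + ((s + t : ℤ) : ℂ) * I := by
        push_cast
        linear_combination hdiff + (t:ℂ) * Complex.I_sq
      obtain ⟨f1, f2⟩ := parts_eq this
      exact ⟨s + p + q, by omega⟩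
    refine ⟨⟨(m, n, p, q), ⟨hsq, hev⟩⟩, ?_⟩
    refine Subtype.ext (Subtype.ext ?_)
    show toVec (m, n, p, q) = v
    funext i
    fin_cases i
    · simp [toVec, hv0]
    · simp [toVec, hv1]

end
end
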